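/- arXiv:2602.00975 — 3 statements merged into one kernel-verified Lean document; each statement's English description precedes it below -/
import Mathlib

section
/- Fix an integer d ≥ 3. There exist constants c, C > 0 depending only on d such that for all integers ℓ ≥ 1, all z ∈ ℂ with Im z > 0, and all Δ ∈ ℂ with Im Δ > 0 satisfying ℓ²·|Δ − m_sc(z)| ≤ c, one has | X_ℓ(Δ,z) − m_d(z) − (d/(d−1))·m_d(z)²·m_sc(z)^{2ℓ}·(Δ − m_sc(z)) | ≤ C·ℓ³·|Δ − m_sc(z)|², where X_ℓ(Δ,z) := ((H_{𝒳_ℓ} − z·I − Δ·𝕀∂)⁻¹)_{oo}. -/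
open scoped Classical

noncomputable section

/-- Vertices of the ball of radius `ℓ` in the infinite `m`-ary rooted tree:
words over `Fin m` of length at most `ℓ`. -/
def TreeBallY (m ℓ : ℕ) : Type := {l : List (Fin m) // l.length ≤ ℓ}

instance (m ℓ : ℕ) : DecidableEq (TreeBallY m ℓ) :=
  inferInstanceAs (DecidableEq {l : List (Fin m) // l.length ≤ ℓ})

instance (m ℓ : ℕ) : Fintype (TreeBallY m ℓ) :=
  Fintype.ofSurjective
    (fun p : (Σ k : Fin (ℓ + 1), List.Vector (Fin m) k) =>
      (⟨p.2.toList, by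
        have h1 : p.2.toList.length = (p.1 : ℕ) := p.2.toList_length
        have h2 := p.1.isLt
        omega⟩ : TreeBallY m ℓ))
    (fun l => ⟨⟨⟨l.1.length, Nat.lt_succ_of_le l.2⟩, ⟨l.1, rfl⟩⟩, rfl⟩)

/-- The tree structure on the ball of radius `ℓ` of the `m`-ary rooted tree:
`x` is adjacent to `y` iff one of them is obtained from the other by appending one letter
(i.e. one is the parent of the other). -/
def treeGraphY (m ℓ : ℕ) : SimpleGraph (TreeBallY m ℓ) :=
  SimpleGraph.fromRel (fun x y => ∃ a : Fin m, y.1 = x.1 ++ [a])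

/-- The root of the tree: the empty word. -/
def rootY (m ℓ : ℕ) : TreeBallY m ℓ := ⟨[], Nat.zero_le _⟩

/-- The normalized adjacency matrix `A/√(d-1)` of the ball `𝒴_ℓ` of radius `ℓ` in the
infinite `(d-1)`-ary tree. -/
def HmatY (d ℓ : ℕ) : Matrix (TreeBallY (d - 1) ℓ) (TreeBallY (d - 1) ℓ) ℂ :=
  fun x y => if (treeGraphY (d - 1) ℓ).Adj x y then (Real.sqrt ((d : ℝ) - 1) : ℂ)⁻¹ else 0

/-- The leaf indicator `𝕀∂` of `𝒴_ℓ`: the diagonal 0-1 matrix whose entry at `x` is `1`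
exactly when `dist(x, o) = ℓ`. -/
def IbdY (d ℓ : ℕ) : Matrix (TreeBallY (d - 1) ℓ) (TreeBallY (d - 1) ℓ) ℂ :=
  Matrix.diagonal (fun x => if (treeGraphY (d - 1) ℓ).dist (rootY (d - 1) ℓ) x = ℓ then 1 else 0)

/-- Vertices of the ball `𝒳_ℓ` of radius `ℓ` in the infinite `d`-regular tree: the root
(`none`), or a first step in `Fin d` followed by a word over `Fin (d-1)` of length at most
`ℓ - 1`. -/
def TreeBallX (d ℓ : ℕ) : Type := Option (Fin d × TreeBallY (d - 1) (ℓ - 1))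

instance (d ℓ : ℕ) : DecidableEq (TreeBallX d ℓ) :=
  inferInstanceAs (DecidableEq (Option (Fin d × TreeBallY (d - 1) (ℓ - 1))))

instance (d ℓ : ℕ) : Fintype (TreeBallX d ℓ) :=
  inferInstanceAs (Fintype (Option (Fin d × TreeBallY (d - 1) (ℓ - 1))))

/-- The tree structure on the ball `𝒳_ℓ` of radius `ℓ` of the `d`-regular tree: the root is
adjacent to the `d` one-step vertices, and within each branch two vertices are adjacent iff one
is the parent of the other. -/
def treeGraphX (d ℓ : ℕ) : SimpleGraph (TreeBallX d ℓ) :=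
  SimpleGraph.fromRel (fun x y =>
    (∃ a : Fin d, x = none ∧ y = some (a, ⟨[], Nat.zero_le _⟩)) ∨
    (∃ (a : Fin d) (s t : TreeBallY (d - 1) (ℓ - 1)),
      x = some (a, s) ∧ y = some (a, t) ∧ ∃ b : Fin (d - 1), t.1 = s.1 ++ [b]))

/-- The root of the `d`-regular tree ball `𝒳_ℓ`. -/
def rootX (d ℓ : ℕ) : TreeBallX d ℓ := none

/-- The normalized adjacency matrix `A/√(d-1)` of the ball `𝒳_ℓ` of radius `ℓ` in the
infinite `d`-regular tree. -/
def HmatX (d ℓ : ℕ) : Matrix (TreeBallX d ℓ) (TreeBallX d ℓ) ℂ :=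
  fun x y => if (treeGraphX d ℓ).Adj x y then (Real.sqrt ((d : ℝ) - 1) : ℂ)⁻¹ else 0

/-- The leaf indicator `𝕀∂` of `𝒳_ℓ`. -/
def IbdX (d ℓ : ℕ) : Matrix (TreeBallX d ℓ) (TreeBallX d ℓ) ℂ :=
  Matrix.diagonal (fun x => if (treeGraphX d ℓ).dist (rootX d ℓ) x = ℓ then 1 else 0)

/-- Longest common prefix of two words. -/
def lcp {m : ℕ} : List (Fin m) → List (Fin m) → List (Fin m)
  | [], _ => []
  | _ :: _, [] => []
  | a :: s, b :: t => if a = b then a :: lcp s t else []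

theorem lcp_length_le_left {m : ℕ} : ∀ s t : List (Fin m), (lcp s t).length ≤ s.length
  | [], _ => by simp [lcp]
  | _ :: _, [] => by simp [lcp]
  | a :: s, b :: t => by
    by_cases h : a = b
    · simp only [lcp, if_pos h, List.length_cons]
      exact Nat.succ_le_succ (lcp_length_le_left s t)
    · simp [lcp, h]

/-- The least common ancestor of two vertices of `𝒴_ℓ`: their longest common prefix. -/
def lcaY {m ℓ : ℕ} (x y : TreeBallY m ℓ) : TreeBallY m ℓ :=
  ⟨lcp x.1 y.1, le_trans (lcp_length_le_left _ _) x.2⟩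

/-- `anc(x,y)`: the distance from the least common ancestor of `x` and `y` to the root `o`. -/
def ancY {m ℓ : ℕ} (x y : TreeBallY m ℓ) : ℕ :=
  (treeGraphY m ℓ).dist (rootY m ℓ) (lcaY x y)

end

/-!
The column `u = G e_o` of the resolvent at the root is radial, and along a branch consecutive
entries differ by the factor `-g / √(d-1)`, where `g` is the root entry of the resolvent of the
subtree hanging below. These subtree entries are the iterates `g_n` of `w ↦ (-z - w)⁻¹` started
at `Δ`, so `X_ℓ = (-z - (d/(d-1)) g_ℓ)⁻¹`. Since `m_sc` is a fixed point of this map with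
`|m_sc| ≤ 1`, the error `e_n = g_n - m_sc` satisfies `e_{n+1} = m_sc² e_n + m_sc e_n e_{n+1}`,
hence `g_n = m_sc + m_sc^{2n} (Δ - m_sc) + O(n |Δ - m_sc|²)` while `n |Δ - m_sc|` is small. A
second-order expansion of `w ↦ (-z - (d/(d-1)) w)⁻¹` at `m_sc` then gives the claim.
-/

theorem SimpleGraph.dist_eq_of_height {V : Type*} {G : SimpleGraph V} {r : V} (h : V → ℕ)
    (h_root : h r = 0) (h_adj : ∀ x y, G.Adj x y → h y ≤ h x + 1)
    (h_pred : ∀ x, x ≠ r → ∃ y, G.Adj y x ∧ h y + 1 = h x) (x : V) :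
    G.dist r x = h x := by
  have walk_length_ge : ∀ {x y : V} (p : G.Walk x y), h y ≤ h x + p.length := by
    intro x y p
    induction p with
    | nil => simp
    | cons hadj _ ih => have := h_adj _ _ hadj; simp only [Walk.length_cons]; omega
  have exists_walk : ∀ n x, h x = n → ∃ p : G.Walk r x, p.length = n := by
    intro n
    induction n with
    | zero =>
      intro x hx
      by_cases hxr : x = r
      · subst hxr; exact ⟨.nil, rfl⟩
      · obtain ⟨y, -, hy⟩ := h_pred x hxr; omega
    | succ n ih =>
      intro x hx
      obtain ⟨y, hyx, hy⟩ := h_pred x (by rintro rfl; omega)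
      obtain ⟨p, hp⟩ := ih y (by omega)
      exact ⟨p.concat hyx, by simp [hp]⟩
  obtain ⟨p, hp⟩ := exists_walk _ x rfl
  obtain ⟨q, hq⟩ := Reachable.exists_walk_length_eq_dist ⟨p⟩
  have := walk_length_ge q
  have := dist_le p
  omega

section TreeBallY
variable {m k : ℕ}

lemma TreeBallY.ext_iff {x y : TreeBallY m k} : x = y ↔ x.1 = y.1 := Subtype.ext_iff

lemma sum_ite_child (s : TreeBallY m k) (f : ℕ → ℂ) :
    ∑ t : TreeBallY m k, (if ∃ b : Fin m, t.1 = s.1 ++ [b] then f t.1.length else 0) =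
      if s.1.length < k then m * f (s.1.length + 1) else 0 := by
  split_ifs with hs
  · let child : Fin m → TreeBallY m k := fun b => ⟨s.1 ++ [b], by simpa using hs⟩
    calc _ = ∑ _b : Fin m, f (s.1.length + 1) := by
          refine (Fintype.sum_of_injective child (fun b c h => ?_) _ _ (fun t ht => if_neg ?_)
            (fun b => ?_)).symm
          · simpa [child] using congrArg Subtype.val h
          · rintro ⟨b, hb⟩
            exact ht ⟨b, TreeBallY.ext_iff.2 hb.symm⟩
          · simp [child]
      _ = _ := by simp
  · refine Finset.sum_eq_zero fun t _ => if_neg ?_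
    rintro ⟨b, hb⟩
    have hlen := congrArg List.length hb
    rw [List.length_append, List.length_singleton] at hlen
    have := t.2
    omega

lemma sum_ite_parent (s : TreeBallY m k) (f : ℕ → ℂ) :
    ∑ t : TreeBallY m k, (if ∃ b : Fin m, s.1 = t.1 ++ [b] then f t.1.length else 0) =
      if s.1 = [] then 0 else f (s.1.length - 1) := by
  split_ifs with hs
  · refine Finset.sum_eq_zero fun t _ => if_neg ?_
    rintro ⟨b, hb⟩
    simp [hs] at hb
  · let parent : TreeBallY m k := ⟨s.1.dropLast, le_trans (by simp) s.2⟩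
    have is_parent (t : TreeBallY m k) : (∃ b : Fin m, s.1 = t.1 ++ [b]) ↔ t = parent := by
      refine ⟨fun ⟨b, hb⟩ => TreeBallY.ext_iff.2 (by simp [parent, hb]), ?_⟩
      rintro rfl
      exact ⟨s.1.getLast hs, (List.dropLast_append_getLast hs).symm⟩
    rw [Fintype.sum_eq_single parent (fun t ht => if_neg (mt (is_parent t).1 ht)),
      if_pos ((is_parent parent).2 rfl)]
    simp [parent]

lemma sum_ite_child_or_parent (s : TreeBallY m k) (f : ℕ → ℂ) :
    ∑ t : TreeBallY m k,
        (if (∃ b : Fin m, t.1 = s.1 ++ [b]) ∨ ∃ b : Fin m, s.1 = t.1 ++ [b] then f t.1.length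
          else 0) =
      (if s.1 = [] then 0 else f (s.1.length - 1)) +
        if s.1.length < k then m * f (s.1.length + 1) else 0 := by
  rw [← sum_ite_child, ← sum_ite_parent, ← Finset.sum_add_distrib]
  refine Finset.sum_congr rfl fun t _ => ?_
  by_cases hchild : ∃ b : Fin m, t.1 = s.1 ++ [b]
  · have hparent : ¬∃ b : Fin m, s.1 = t.1 ++ [b] := by
      rintro ⟨b, hb⟩
      obtain ⟨c, hc⟩ := hchild
      simpa using congrArg List.length (hb.trans (congrArg (· ++ [b]) hc))
    simp [hchild, hparent]
  · simp [hchild]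

end TreeBallY

section TreeBallX

variable {d ℓ : ℕ}

lemma treeGraphX_adj_none_some (b : Fin d) (t : TreeBallY (d - 1) (ℓ - 1)) :
    (treeGraphX d ℓ).Adj none (some (b, t)) ↔ t.1 = [] := by
  refine (SimpleGraph.fromRel_adj _ _ _).trans ?_
  dsimp only [TreeBallX]
  simpa [Prod.ext_iff] using TreeBallY.ext_iff (x := t) (y := ⟨[], Nat.zero_le _⟩)

lemma treeGraphX_adj_some_none (a : Fin d) (s : TreeBallY (d - 1) (ℓ - 1)) :
    (treeGraphX d ℓ).Adj (some (a, s)) none ↔ s.1 = [] := by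
  refine (SimpleGraph.fromRel_adj _ _ _).trans ?_
  dsimp only [TreeBallX]
  simpa [Prod.ext_iff] using TreeBallY.ext_iff (x := s) (y := ⟨[], Nat.zero_le _⟩)

lemma treeGraphX_adj_some_some (a b : Fin d) (s t : TreeBallY (d - 1) (ℓ - 1)) :
    (treeGraphX d ℓ).Adj (some (a, s)) (some (b, t)) ↔
      b = a ∧ ((∃ c : Fin (d - 1), t.1 = s.1 ++ [c]) ∨ ∃ c : Fin (d - 1), s.1 = t.1 ++ [c]) := by
  have hne : ((∃ c : Fin (d - 1), t.1 = s.1 ++ [c]) ∨ ∃ c : Fin (d - 1), s.1 = t.1 ++ [c]) →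
      s ≠ t := by
    rintro (⟨c, hc⟩ | ⟨c, hc⟩) rfl <;> simpa using congrArg List.length hc
  refine (SimpleGraph.fromRel_adj _ _ _).trans ?_
  dsimp only [TreeBallX]
  simp only [ne_eq, Option.some.injEq, Prod.ext_iff, not_and, reduceCtorEq, false_and, exists_false,
    exists_and_left, ↓existsAndEq, and_true, exists_eq_left', false_or]
  constructor
  · rintro ⟨-, ⟨rfl, h⟩ | ⟨rfl, h⟩⟩
    exacts [⟨rfl, .inl h⟩, ⟨rfl, .inr h⟩]
  · rintro ⟨rfl, h⟩
    exact ⟨fun _ => hne h, by tauto⟩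

def depthX (d ℓ : ℕ) : TreeBallX d ℓ → ℕ
  | none => 0
  | some (_, s) => s.1.length + 1

@[simp] lemma depthX_none : depthX d ℓ none = 0 := rfl

@[simp] lemma depthX_some (a : Fin d) (s : TreeBallY (d - 1) (ℓ - 1)) :
    depthX d ℓ (some (a, s)) = s.1.length + 1 := rfl

lemma depthX_le_of_adj {x y : TreeBallX d ℓ} (h : (treeGraphX d ℓ).Adj x y) :
    depthX d ℓ y ≤ depthX d ℓ x + 1 := by
  rcases x with _ | ⟨a, s⟩ <;> rcases y with _ | ⟨b, t⟩
  · exact absurd h (SimpleGraph.irrefl _)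
  · simp [(treeGraphX_adj_none_some b t).1 h]
  · simp
  · rcases ((treeGraphX_adj_some_some a b s t).1 h).2 with ⟨c, hc⟩ | ⟨c, hc⟩ <;> simp [hc]

lemma exists_adj_depthX_succ {x : TreeBallX d ℓ} (hx : x ≠ rootX d ℓ) :
    ∃ y, (treeGraphX d ℓ).Adj y x ∧ depthX d ℓ y + 1 = depthX d ℓ x := by
  rcases x with _ | ⟨a, s⟩
  · exact absurd rfl hx
  by_cases hs : s.1 = []
  · exact ⟨none, (treeGraphX_adj_none_some a s).2 hs, by simp [hs]⟩
  · refine ⟨some (a, ⟨s.1.dropLast, le_trans (by simp) s.2⟩),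
      (treeGraphX_adj_some_some a a _ s).2 ⟨rfl, .inl ⟨s.1.getLast hs, ?_⟩⟩, ?_⟩
    · exact (List.dropLast_append_getLast hs).symm
    · have : s.1.length ≠ 0 := by simpa using hs
      change s.1.dropLast.length + 1 + 1 = s.1.length + 1
      rw [List.length_dropLast]
      omega

lemma dist_rootX (x : TreeBallX d ℓ) : (treeGraphX d ℓ).dist (rootX d ℓ) x = depthX d ℓ x :=
  SimpleGraph.dist_eq_of_height (depthX d ℓ) rfl (fun _ _ => depthX_le_of_adj)
    (fun _ => exists_adj_depthX_succ) x

end TreeBallX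

section HmatX
open Matrix
variable {d ℓ : ℕ}

noncomputable def hopWeight (d : ℕ) : ℂ := (Real.sqrt ((d : ℝ) - 1) : ℂ)⁻¹

lemma hopWeight_sq (hd : 2 ≤ d) : ((d : ℂ) - 1) * hopWeight d ^ 2 = 1 := by
  have hd1 : (0 : ℝ) < d - 1 := by
    have : (2 : ℝ) ≤ d := by exact_mod_cast hd
    linarith
  have hne : (d : ℂ) - 1 ≠ 0 := by exact_mod_cast hd1.ne'
  rw [hopWeight, inv_pow, ← Complex.ofReal_pow, Real.sq_sqrt hd1.le]
  push_cast
  exact mul_inv_cancel₀ hne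

lemma conj_hopWeight : starRingEnd ℂ (hopWeight d) = hopWeight d := by
  rw [hopWeight, map_inv₀, Complex.conj_ofReal]

lemma HmatX_apply (x y : TreeBallX d ℓ) :
    HmatX d ℓ x y = if (treeGraphX d ℓ).Adj x y then hopWeight d else 0 := rfl

lemma sum_treeBallX (f : TreeBallX d ℓ → ℂ) :
    ∑ x, f x = f none + ∑ a : Fin d, ∑ s : TreeBallY (d - 1) (ℓ - 1), f (some (a, s)) :=
  (Fintype.sum_option f).trans (congrArg _ (Fintype.sum_prod_type _))

lemma HmatX_mulVec_apply (v : TreeBallX d ℓ → ℂ) (x : TreeBallX d ℓ) :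
    (HmatX d ℓ *ᵥ v) x = ∑ y, if (treeGraphX d ℓ).Adj x y then hopWeight d * v y else 0 := by
  change ∑ y, HmatX d ℓ x y * v y = _
  simp only [HmatX_apply, ite_mul, zero_mul]

lemma HmatX_mulVec_depthX_none (f : ℕ → ℂ) :
    (HmatX d ℓ *ᵥ fun x => f (depthX d ℓ x)) none = d * (hopWeight d * f 1) := by
  refine (HmatX_mulVec_apply _ _).trans ?_
  have not_loop : ¬(treeGraphX d ℓ).Adj none none := SimpleGraph.irrefl _
  rw [sum_treeBallX]
  simp only [not_loop, if_false, zero_add, treeGraphX_adj_none_some, depthX_some]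
  have leg : ∑ t : TreeBallY (d - 1) (ℓ - 1),
      (if t.1 = [] then hopWeight d * f (t.1.length + 1) else 0) = hopWeight d * f 1 :=
    (Fintype.sum_eq_single (rootY _ _) fun t ht => if_neg (mt TreeBallY.ext_iff.2 ht)).trans
      (by simp [rootY])
  simp [leg]

lemma HmatX_mulVec_depthX_some (f : ℕ → ℂ) (a : Fin d) (s : TreeBallY (d - 1) (ℓ - 1)) :
    (HmatX d ℓ *ᵥ fun x => f (depthX d ℓ x)) (some (a, s)) =
      hopWeight d * (f s.1.length +
        if s.1.length < ℓ - 1 then ((d - 1 : ℕ) : ℂ) * f (s.1.length + 2) else 0) := by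
  refine (HmatX_mulVec_apply _ _).trans ?_
  rw [sum_treeBallX]
  simp only [treeGraphX_adj_some_none, treeGraphX_adj_some_some, ite_and, depthX_some,
    depthX_none]
  rw [Fintype.sum_eq_single a fun b hb => Finset.sum_eq_zero fun t _ => if_neg hb]
  simp only [if_true]
  refine (congrArg _ (sum_ite_child_or_parent s fun n => hopWeight d * f (n + 1))).trans ?_
  by_cases hs : s.1 = []
  · simp only [hs, ↓reduceIte, List.length_nil, zero_add]
    split_ifs <;> ring
  · have : s.1.length - 1 + 1 = s.1.length := Nat.sub_add_cancel (List.length_pos_iff.2 hs)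
    simp only [hs, ↓reduceIte, this, zero_add]
    split_ifs <;> ring

end HmatX

open Matrix in
theorem Matrix.isUnit_add_diagonal_of_im_neg {n : Type*} [Fintype n] [DecidableEq n]
    {H : Matrix n n ℂ} (hH : H.IsHermitian) {b : n → ℂ} (hb : ∀ i, (b i).im < 0) :
    IsUnit (H + diagonal b) := by
  rw [← mulVec_injective_iff_isUnit]
  intro v w hvw
  set u := v - w
  have hu : (H + diagonal b) *ᵥ u = 0 := by simp [u, mulVec_sub, hvw]
  have him : ∑ i, (b i).im * Complex.normSq (u i) = 0 := by
    have := congrArg (fun c => (star u ⬝ᵥ c).im) hu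
    simp only [add_mulVec, dotProduct_add, Complex.add_im] at this
    have h0 := hH.im_star_dotProduct_mulVec_self u
    simp only [RCLike.im_to_complex] at h0
    rw [h0] at this
    simp only [dotProduct, mulVec_diagonal, Complex.im_sum, Pi.star_apply, Complex.star_def,
      Complex.mul_im, Complex.mul_re, Complex.conj_re, Complex.conj_im, zero_add, Pi.zero_apply,
      Complex.zero_im, mul_zero, Finset.sum_const_zero] at this
    rw [← this]
    refine Finset.sum_congr rfl fun i _ => ?_
    rw [Complex.normSq_apply]
    ring
  have hzero := (Finset.sum_eq_zero_iff_of_nonpos fun i _ =>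
    mul_nonpos_of_nonpos_of_nonneg (hb i).le (Complex.normSq_nonneg (u i))).1 him
  refine sub_eq_zero.1 (funext fun i => ?_)
  simpa [(hb i).ne, u] using hzero i (Finset.mem_univ i)

section Recursion
variable {z Δ w : ℂ}

lemma neg_sub_ofReal_mul_ne_zero {t : ℝ} (ht : 0 ≤ t) (hz : 0 < z.im) (hw : 0 ≤ w.im) :
    -z - t * w ≠ 0 := by
  intro h
  have := congrArg Complex.im h
  simp only [Complex.sub_im, Complex.neg_im, Complex.zero_im,
    Complex.im_ofReal_mul] at this
  nlinarith

lemma neg_sub_ne_zero_of_im (hz : 0 < z.im) (hw : 0 ≤ w.im) : -z - w ≠ 0 := by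
  simpa using neg_sub_ofReal_mul_ne_zero zero_le_one hz hw

/-- `greenSeq z Δ (n + 1)` is the root entry of `(HmatY d n - z • 1 - Δ • IbdY d n)⁻¹`, for every
`d ≥ 2`. -/
noncomputable def greenSeq (z Δ : ℂ) (n : ℕ) : ℂ := (fun w => (-z - w)⁻¹)^[n] Δ

lemma greenSeq_zero : greenSeq z Δ 0 = Δ := rfl

lemma greenSeq_succ (n : ℕ) : greenSeq z Δ (n + 1) = (-z - greenSeq z Δ n)⁻¹ :=
  Function.iterate_succ_apply' _ _ _

lemma im_greenSeq_nonneg (hz : 0 < z.im) (hΔ : 0 ≤ Δ.im) (n : ℕ) : 0 ≤ (greenSeq z Δ n).im := by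
  induction n with
  | zero => exact hΔ
  | succ n ih =>
    rw [greenSeq_succ, Complex.inv_im, Complex.sub_im, Complex.neg_im]
    exact div_nonneg (by linarith) (Complex.normSq_nonneg _)

lemma greenSeq_succ_mul (hz : 0 < z.im) (hΔ : 0 ≤ Δ.im) (n : ℕ) :
    greenSeq z Δ (n + 1) * (-z - greenSeq z Δ n) = 1 := by
  rw [greenSeq_succ]
  exact inv_mul_cancel₀ (neg_sub_ne_zero_of_im hz (im_greenSeq_nonneg hz hΔ n))

end Recursion

section RootColumn
variable {d ℓ : ℕ} {z Δ : ℂ}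

/-- The root column of `(HmatX d ℓ - z • 1 - Δ • IbdX d ℓ)⁻¹` as a function of depth: along a
branch, the entry at depth `j + 1` is `-g / √(d-1)` times the one at depth `j`, with `g` the root
entry on the subtree hanging below. -/
noncomputable def rootColumn (d : ℕ) (z Δ : ℂ) (ℓ : ℕ) : ℕ → ℂ
  | 0 => (-z - (d : ℂ) / ((d : ℂ) - 1) * greenSeq z Δ ℓ)⁻¹
  | j + 1 => rootColumn d z Δ ℓ j * (-hopWeight d) * greenSeq z Δ (ℓ - j)

lemma rootColumn_root_row (hd : 2 ≤ d) (hz : 0 < z.im) (hΔ : 0 ≤ Δ.im) :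
    d * (hopWeight d * rootColumn d z Δ ℓ 1) - z * rootColumn d z Δ ℓ 0 = 1 := by
  have hne : -z - (d : ℂ) / ((d : ℂ) - 1) * greenSeq z Δ ℓ ≠ 0 := by
    have hd1 : (0 : ℝ) ≤ d - 1 := by
      have : (2 : ℝ) ≤ d := by exact_mod_cast hd
      linarith
    have := neg_sub_ofReal_mul_ne_zero (t := d / (d - 1)) (div_nonneg d.cast_nonneg hd1) hz
      (im_greenSeq_nonneg hz hΔ ℓ)
    push_cast at this
    exact this
  have hdd : (d : ℂ) * hopWeight d ^ 2 = (d : ℂ) / ((d : ℂ) - 1) := by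
    rw [eq_div_iff (left_ne_zero_of_mul_eq_one (hopWeight_sq hd))]
    linear_combination (d : ℂ) * hopWeight_sq hd
  have h0 : rootColumn d z Δ ℓ 0 * (-z - (d : ℂ) / ((d : ℂ) - 1) * greenSeq z Δ ℓ) = 1 :=
    inv_mul_cancel₀ hne
  have h1 : rootColumn d z Δ ℓ 1 = rootColumn d z Δ ℓ 0 * (-hopWeight d) * greenSeq z Δ ℓ := rfl
  rw [h1]
  linear_combination h0 - rootColumn d z Δ ℓ 0 * greenSeq z Δ ℓ * hdd

lemma rootColumn_interior_row (hd : 2 ≤ d) (hz : 0 < z.im) (hΔ : 0 ≤ Δ.im) {j : ℕ}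
    (hj : j + 1 < ℓ) :
    hopWeight d * rootColumn d z Δ ℓ j +
        ((d - 1 : ℕ) : ℂ) * (hopWeight d * rootColumn d z Δ ℓ (j + 2)) -
      z * rootColumn d z Δ ℓ (j + 1) = 0 := by
  set g := greenSeq z Δ (ℓ - (j + 1))
  have h1 : rootColumn d z Δ ℓ (j + 1) * (-z - g) = rootColumn d z Δ ℓ j * (-hopWeight d) := by
    have hstep := greenSeq_succ_mul hz hΔ (ℓ - (j + 1))
    rw [show ℓ - (j + 1) + 1 = ℓ - j by omega] at hstep
    change rootColumn d z Δ ℓ j * (-hopWeight d) * greenSeq z Δ (ℓ - j) * (-z - g) = _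
    linear_combination rootColumn d z Δ ℓ j * (-hopWeight d) * hstep
  have h2 : rootColumn d z Δ ℓ (j + 2) = rootColumn d z Δ ℓ (j + 1) * (-hopWeight d) * g := rfl
  rw [h2, Nat.cast_sub (by omega), Nat.cast_one]
  linear_combination h1 - g * rootColumn d z Δ ℓ (j + 1) * hopWeight_sq hd

lemma rootColumn_leaf_row (hℓ : 1 ≤ ℓ) (hz : 0 < z.im) (hΔ : 0 ≤ Δ.im) :
    hopWeight d * rootColumn d z Δ ℓ (ℓ - 1) - z * rootColumn d z Δ ℓ ℓ -
      Δ * rootColumn d z Δ ℓ ℓ = 0 := by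
  obtain ⟨k, rfl⟩ : ∃ k, ℓ = k + 1 := ⟨ℓ - 1, by omega⟩
  have hstep : greenSeq z Δ 1 * (-z - Δ) = 1 := greenSeq_succ_mul hz hΔ 0
  have hleaf : rootColumn d z Δ (k + 1) (k + 1) =
      rootColumn d z Δ (k + 1) k * (-hopWeight d) * greenSeq z Δ 1 := by
    rw [rootColumn, Nat.add_sub_cancel_left]
  rw [Nat.add_sub_cancel, hleaf]
  linear_combination (-rootColumn d z Δ (k + 1) k * hopWeight d) * hstep

end RootColumn

section Resolvent
open Matrix
variable {d ℓ : ℕ} {z Δ : ℂ}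

lemma IbdX_eq_diagonal : IbdX d ℓ = diagonal fun x => if depthX d ℓ x = ℓ then 1 else 0 := by
  simp only [IbdX, dist_rootX]

lemma HmatX_sub_mulVec_rootColumn (hd : 2 ≤ d) (hℓ : 1 ≤ ℓ) (hz : 0 < z.im) (hΔ : 0 ≤ Δ.im) :
    (HmatX d ℓ - z • 1 - Δ • IbdX d ℓ) *ᵥ (fun x => rootColumn d z Δ ℓ (depthX d ℓ x)) =
      Pi.single (rootX d ℓ) 1 := by
  funext x
  rw [sub_mulVec, sub_mulVec, smul_mulVec, smul_mulVec, one_mulVec, IbdX_eq_diagonal]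
  simp only [Pi.sub_apply, Pi.smul_apply, smul_eq_mul, mulVec_diagonal]
  rcases x with _ | ⟨a, s⟩
  · have hroot : (Pi.single (rootX d ℓ) 1 : TreeBallX d ℓ → ℂ) none = 1 := Pi.single_eq_same _ _
    have hℓ0 : (0 = ℓ) = False := eq_false (by omega)
    rw [hroot, HmatX_mulVec_depthX_none]
    simp only [depthX_none, hℓ0, if_false, zero_mul, mul_zero, sub_zero]
    exact rootColumn_root_row hd hz hΔ
  · have hsingle : (Pi.single (rootX d ℓ) 1 : TreeBallX d ℓ → ℂ) (some (a, s)) = 0 :=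
      Pi.single_eq_of_ne (Option.some_ne_none _) _
    rw [hsingle, HmatX_mulVec_depthX_some]
    simp only [depthX_some]
    have hs : s.1.length ≤ ℓ - 1 := s.2
    rcases hs.lt_or_eq with hs | hs
    · have hinner : s.1.length + 1 ≠ ℓ := by omega
      simp only [hs, hinner, if_true, if_false]
      linear_combination rootColumn_interior_row hd hz hΔ (by omega : s.1.length + 1 < ℓ)
    · simp only [hs, Nat.sub_add_cancel hℓ, lt_irrefl, if_true, if_false]
      linear_combination rootColumn_leaf_row hℓ hz hΔ

lemma HmatX_isHermitian : (HmatX d ℓ).IsHermitian :=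
  IsHermitian.ext fun x y => by
    simp only [HmatX_apply, (treeGraphX d ℓ).adj_comm y x]
    split_ifs
    exacts [conj_hopWeight, star_zero _]

lemma isUnit_HmatX_sub (hz : 0 < z.im) (hΔ : 0 ≤ Δ.im) :
    IsUnit (HmatX d ℓ - z • 1 - Δ • IbdX d ℓ) := by
  have hM : HmatX d ℓ - z • 1 - Δ • IbdX d ℓ =
      HmatX d ℓ + diagonal fun x => -z - Δ * if depthX d ℓ x = ℓ then 1 else 0 := by
    rw [IbdX_eq_diagonal]
    ext x y
    by_cases hxy : x = y
    · subst hxy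
      simp only [Matrix.sub_apply, Matrix.smul_apply, one_apply_eq, smul_eq_mul, mul_one,
        diagonal_apply_eq, mul_ite, mul_zero, Matrix.add_apply]
      ring
    · simp [hxy]
  rw [hM]
  refine isUnit_add_diagonal_of_im_neg HmatX_isHermitian fun x => ?_
  split_ifs
  · simp only [mul_one, Complex.sub_im, Complex.neg_im]
    linarith
  · simp only [mul_zero, sub_zero, Complex.neg_im]
    linarith

lemma inv_HmatX_sub_rootX_rootX (hd : 2 ≤ d) (hℓ : 1 ≤ ℓ) (hz : 0 < z.im) (hΔ : 0 ≤ Δ.im) :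
    (HmatX d ℓ - z • 1 - Δ • IbdX d ℓ)⁻¹ (rootX d ℓ) (rootX d ℓ) =
      (-z - (d : ℂ) / ((d : ℂ) - 1) * greenSeq z Δ ℓ)⁻¹ := by
  have hcol := congrArg ((HmatX d ℓ - z • 1 - Δ • IbdX d ℓ)⁻¹ *ᵥ ·)
    (HmatX_sub_mulVec_rootColumn hd hℓ hz hΔ)
  rw [mulVec_mulVec, nonsing_inv_mul _ ((isUnit_iff_isUnit_det _).1 (isUnit_HmatX_sub hz hΔ)),
    one_mulVec] at hcol
  have := congrFun hcol (rootX d ℓ)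
  rw [mulVec_single, MulOpposite.op_one, one_smul] at this
  exact this.symm

end Resolvent

section Estimates
variable {z m : ℂ}

lemma inv_eq_neg_sub_of_quadratic (hm : m ^ 2 + z * m + 1 = 0) : m⁻¹ = -z - m :=
  inv_eq_of_mul_eq_one_right (by linear_combination -hm)

lemma norm_le_one_of_quadratic (hm : m ^ 2 + z * m + 1 = 0) (hz : 0 < z.im) (him : 0 < m.im) :
    ‖m‖ ≤ 1 := by
  have hmw : m = (-z - m)⁻¹ := by rw [← inv_eq_neg_sub_of_quadratic hm, inv_inv]
  have hprod : Complex.normSq m * Complex.normSq (-z - m) = 1 := by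
    rw [← Complex.normSq_mul, ← inv_eq_neg_sub_of_quadratic hm,
      mul_inv_cancel₀ (by rintro rfl; simp at hm), Complex.normSq_one]
  have him_eq : m.im * Complex.normSq (-z - m) = z.im + m.im := by
    have hN : Complex.normSq (-z - m) ≠ 0 := by
      intro h; rw [h, mul_zero] at hprod; exact zero_ne_one hprod
    have : m.im = -(-z - m).im / Complex.normSq (-z - m) := by rw [← Complex.inv_im, ← hmw]
    nth_rewrite 1 [this]
    rw [div_mul_cancel₀ _ hN]
    simp only [Complex.sub_im, Complex.neg_im]
    ring
  have hN : 1 < Complex.normSq (-z - m) := by nlinarith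
  have hsq : ‖m‖ ^ 2 < 1 := by
    rw [← Complex.normSq_eq_norm_sq]
    nlinarith [Complex.normSq_nonneg m]
  nlinarith [norm_nonneg m]

lemma half_le_norm_neg_sub_mul (hm : m ^ 2 + z * m + 1 = 0) (hm1 : ‖m‖ ≤ 1) {t : ℂ}
    (ht : ‖t - 1‖ ≤ 1 / 2) : 1 / 2 ≤ ‖-z - t * m‖ := by
  have hne : m ≠ 0 := by rintro rfl; simp at hm
  have hinv : 1 ≤ ‖m⁻¹‖ := by
    rw [norm_inv]; exact one_le_inv₀ (norm_pos_iff.2 hne) |>.2 hm1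
  have hsplit : -z - t * m = m⁻¹ - (t - 1) * m := by rw [inv_eq_neg_sub_of_quadratic hm]; ring
  have hsmall : ‖(t - 1) * m‖ ≤ 1 / 2 := by
    rw [norm_mul]; nlinarith [norm_nonneg (t - 1), norm_nonneg m]
  rw [hsplit]
  linarith [norm_sub_norm_le m⁻¹ ((t - 1) * m)]

lemma sub_eq_of_mul_neg_sub_eq_one (hm : m ^ 2 + z * m + 1 = 0) {x a : ℂ}
    (ha : a * (-z - x) = 1) : a - m = m ^ 2 * (x - m) + m * (x - m) * (a - m) := by
  linear_combination m * ha + a * hm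

lemma norm_sub_sub_sq_mul_le (hm : m ^ 2 + z * m + 1 = 0) (hm1 : ‖m‖ ≤ 1) {x a : ℂ}
    (ha : a * (-z - x) = 1) (hx : ‖x - m‖ ≤ 1 / 5) :
    ‖a - m - m ^ 2 * (x - m)‖ ≤ 5 / 4 * ‖x - m‖ ^ 2 := by
  have hE := sub_eq_of_mul_neg_sub_eq_one hm ha
  have hm2 : ‖m‖ ^ 2 ≤ 1 := pow_le_one₀ (norm_nonneg m) hm1
  have hxm := norm_nonneg (x - m)
  have ham := norm_nonneg (a - m)
  have ha_le : ‖a - m‖ ≤ 5 / 4 * ‖x - m‖ := by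
    have : ‖a - m‖ ≤ ‖m‖ ^ 2 * ‖x - m‖ + ‖m‖ * ‖x - m‖ * ‖a - m‖ := by
      calc ‖a - m‖ = ‖m ^ 2 * (x - m) + m * (x - m) * (a - m)‖ := by rw [← hE]
        _ ≤ _ := norm_add_le _ _
        _ = _ := by rw [norm_mul, norm_mul, norm_mul, norm_pow]
    nlinarith [mul_le_mul hm1 hx hxm zero_le_one, norm_nonneg m]
  rw [show a - m - m ^ 2 * (x - m) = m * (x - m) * (a - m) by linear_combination hE,
    norm_mul, norm_mul]
  nlinarith [mul_le_mul hm1 ha_le ham zero_le_one, norm_nonneg m]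

lemma norm_greenSeq_sub_le (hz : 0 < z.im) {Δ : ℂ} (hΔ : 0 ≤ Δ.im)
    (hm : m ^ 2 + z * m + 1 = 0) (hm1 : ‖m‖ ≤ 1) (n : ℕ) (hn : n * ‖Δ - m‖ ≤ 1 / 10) :
    ‖greenSeq z Δ n - m‖ ≤ 2 * ‖Δ - m‖ ∧
      ‖greenSeq z Δ n - m - m ^ (2 * n) * (Δ - m)‖ ≤ 8 * n * ‖Δ - m‖ ^ 2 := by
  set r := ‖Δ - m‖
  have hr : 0 ≤ r := norm_nonneg _
  induction n with
  | zero =>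
    refine ⟨?_, by simp [greenSeq_zero]⟩
    rw [greenSeq_zero]
    linarith
  | succ n ih =>
    push_cast at hn
    obtain ⟨he, hlin⟩ := ih (by nlinarith)
    set e := greenSeq z Δ n - m
    have hr10 : r ≤ 1 / 10 := by nlinarith [(Nat.cast_nonneg n : (0 : ℝ) ≤ n)]
    have hstep := norm_sub_sub_sq_mul_le hm hm1 (greenSeq_succ_mul hz hΔ n) (by linarith)
    have hm2 : ‖m‖ ^ 2 ≤ 1 := pow_le_one₀ (norm_nonneg m) hm1
    have hlin' : ‖greenSeq z Δ (n + 1) - m - m ^ (2 * (n + 1)) * (Δ - m)‖ ≤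
        8 * (n + 1 : ℕ) * r ^ 2 := by
      have hsplit : greenSeq z Δ (n + 1) - m - m ^ (2 * (n + 1)) * (Δ - m) =
          (greenSeq z Δ (n + 1) - m - m ^ 2 * e) + m ^ 2 * (e - m ^ (2 * n) * (Δ - m)) := by
        ring
      calc _ ≤ 5 / 4 * ‖e‖ ^ 2 + ‖m‖ ^ 2 * (8 * n * r ^ 2) := by
            rw [hsplit]
            refine (norm_add_le _ _).trans (add_le_add hstep ?_)
            rw [norm_mul, norm_pow]
            exact mul_le_mul_of_nonneg_left hlin (by positivity)
        _ ≤ 5 / 4 * (2 * r) ^ 2 + 1 * (8 * n * r ^ 2) := by gcongr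
        _ ≤ 8 * (n + 1 : ℕ) * r ^ 2 := by push_cast; nlinarith
    refine ⟨?_, hlin'⟩
    have hpow : ‖m ^ (2 * (n + 1)) * (Δ - m)‖ ≤ r := by
      rw [norm_mul, norm_pow]
      exact mul_le_of_le_one_left hr (pow_le_one₀ (norm_nonneg m) hm1)
    calc ‖greenSeq z Δ (n + 1) - m‖
        ≤ ‖greenSeq z Δ (n + 1) - m - m ^ (2 * (n + 1)) * (Δ - m)‖ +
            ‖m ^ (2 * (n + 1)) * (Δ - m)‖ := norm_le_norm_sub_add _ _
      _ ≤ 8 * (n + 1 : ℕ) * r ^ 2 + r := add_le_add hlin' hpow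
      _ ≤ 2 * r := by push_cast; nlinarith

end Estimates

lemma norm_inv_sub_inv_sub_le {b s : ℂ} (hb : 1 / 2 ≤ ‖b‖) (hs : ‖s‖ ≤ 3 / 10) :
    ‖(b - s)⁻¹ - b⁻¹ - b⁻¹ ^ 2 * s‖ ≤ 20 * ‖s‖ ^ 2 := by
  have hb0 : b ≠ 0 := norm_pos_iff.1 (by linarith)
  have hbs : 1 / 5 ≤ ‖b - s‖ := by linarith [norm_sub_norm_le b s]
  have hbs0 : b - s ≠ 0 := norm_pos_iff.1 (by linarith)
  have hid : (b - s)⁻¹ - b⁻¹ - b⁻¹ ^ 2 * s = s ^ 2 * b⁻¹ ^ 2 * (b - s)⁻¹ := by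
    field_simp
    ring
  have hinv : ‖b⁻¹‖ ≤ 2 := by
    rw [norm_inv]; exact inv_le_of_inv_le₀ (by norm_num) (by linarith)
  have hinv' : ‖(b - s)⁻¹‖ ≤ 5 := by
    rw [norm_inv]; exact inv_le_of_inv_le₀ (by norm_num) (by linarith)
  rw [hid, norm_mul, norm_mul, norm_pow, norm_pow]
  have := mul_le_mul (pow_le_pow_left₀ (norm_nonneg _) hinv 2) hinv' (norm_nonneg _) (by norm_num)
  nlinarith [sq_nonneg ‖s‖]

lemma norm_inv_neg_sub_mul_expansion_le {z m t g L : ℂ} (hm : m ^ 2 + z * m + 1 = 0)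
    (hm1 : ‖m‖ ≤ 1) (ht : ‖t - 1‖ ≤ 1 / 2) (hg : ‖g - m‖ ≤ 1 / 5) :
    ‖(-z - t * g)⁻¹ - (-z - t * m)⁻¹ - t * ((-z - t * m)⁻¹) ^ 2 * L‖ ≤
      45 * ‖g - m‖ ^ 2 + 6 * ‖g - m - L‖ := by
  have ht' : ‖t‖ ≤ 3 / 2 := by linarith [norm_le_norm_sub_add t 1, norm_one (α := ℂ)]
  have hb := half_le_norm_neg_sub_mul hm hm1 ht
  have hs : ‖t * (g - m)‖ ≤ 3 / 10 := by
    rw [norm_mul]; nlinarith [norm_nonneg t, norm_nonneg (g - m)]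
  have hquad := norm_inv_sub_inv_sub_le hb hs
  have hinv : ‖(-z - t * m)⁻¹‖ ≤ 2 := by
    rw [norm_inv]; exact inv_le_of_inv_le₀ (by norm_num) (by linarith)
  have hsplit : (-z - t * g)⁻¹ - (-z - t * m)⁻¹ - t * ((-z - t * m)⁻¹) ^ 2 * L =
      ((-z - t * m - t * (g - m))⁻¹ - (-z - t * m)⁻¹ - ((-z - t * m)⁻¹) ^ 2 * (t * (g - m))) +
        t * ((-z - t * m)⁻¹) ^ 2 * (g - m - L) := by
    ring_nf
  rw [hsplit]
  refine (norm_add_le _ _).trans ?_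
  rw [norm_mul t (g - m)] at hquad
  rw [norm_mul, norm_mul, norm_pow]
  have h4 : ‖(-z - t * m)⁻¹‖ ^ 2 ≤ 4 := by nlinarith [norm_nonneg (-z - t * m)⁻¹]
  have htw : ‖t‖ * ‖(-z - t * m)⁻¹‖ ^ 2 ≤ 6 := by
    nlinarith [mul_le_mul ht' h4 (by positivity) (by norm_num)]
  have hts : (‖t‖ * ‖g - m‖) ^ 2 ≤ 9 / 4 * ‖g - m‖ ^ 2 := by
    rw [mul_pow]; gcongr; nlinarith [norm_nonneg t]
  nlinarith [mul_le_mul_of_nonneg_right htw (norm_nonneg (g - m - L))]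

lemma norm_natCast_div_sub_one_sub_one_le {d : ℕ} (hd : 3 ≤ d) :
    ‖(d : ℂ) / ((d : ℂ) - 1) - 1‖ ≤ 1 / 2 := by
  have hd' : (3 : ℝ) ≤ d := by exact_mod_cast hd
  have hne : (d : ℂ) - 1 ≠ 0 := by
    rw [sub_ne_zero]; exact_mod_cast (by omega : d ≠ 1)
  have : (d : ℂ) / ((d : ℂ) - 1) - 1 = ((1 / ((d : ℝ) - 1) : ℝ) : ℂ) := by
    push_cast
    field_simp
    ring
  rw [this, Complex.norm_real, Real.norm_of_nonneg (div_nonneg zero_le_one (by linarith))]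
  rw [div_le_div_iff₀ (by linarith) (by norm_num)]
  linarith

/-- **Linear expansion of `X_ℓ(Δ,z)` around `m_sc(z)`.** Fix `d ≥ 3`. There are constants
`c, C > 0` depending only on `d` such that for all `ℓ ≥ 1`, `z ∈ ℂ` with `Im z > 0` (with
`m_sc(z)` the unique root of `m² + z m + 1 = 0` with positive imaginary part and
`m_d(z) = 1/(-z - (d/(d-1)) m_sc(z))`), and all `Δ` with `Im Δ > 0` and
`ℓ² |Δ - m_sc(z)| ≤ c`, the quantity `X_ℓ(Δ,z) := ((H_{𝒳_ℓ} - z·I - Δ·𝕀∂)⁻¹)_{oo}`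
satisfies `|X_ℓ(Δ,z) - m_d - (d/(d-1)) m_d² m_sc^{2ℓ} (Δ - m_sc)| ≤ C ℓ³ |Δ - m_sc|²`. -/
theorem X_expansion (d : ℕ) (hd : 3 ≤ d) :
    ∃ c C : ℝ, 0 < c ∧ 0 < C ∧
      ∀ (ℓ : ℕ), 1 ≤ ℓ →
      ∀ (z msc Δ : ℂ), 0 < z.im → msc ^ 2 + z * msc + 1 = 0 → 0 < msc.im → 0 < Δ.im →
        (ℓ : ℝ) ^ 2 * ‖Δ - msc‖ ≤ c →
        ‖(((HmatX d ℓ - z • 1 - Δ • IbdX d ℓ)⁻¹) (rootX d ℓ) (rootX d ℓ)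
              - (-z - ((d : ℂ) / ((d : ℂ) - 1)) * msc)⁻¹
              - ((d : ℂ) / ((d : ℂ) - 1)) * ((-z - ((d : ℂ) / ((d : ℂ) - 1)) * msc)⁻¹) ^ 2 *
                  msc ^ (2 * ℓ) * (Δ - msc))‖ ≤
          C * (ℓ : ℝ) ^ 3 * ‖Δ - msc‖ ^ 2 := by
  refine ⟨1 / 10, 228, by norm_num, by norm_num, fun ℓ hℓ z msc Δ hz hmsc him hΔ hc => ?_⟩
  have hm1 := norm_le_one_of_quadratic hmsc hz him
  have hℓ1 : (1 : ℝ) ≤ ℓ := by exact_mod_cast hℓ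
  have hr : 0 ≤ ‖Δ - msc‖ := norm_nonneg _
  obtain ⟨hg, hglin⟩ := norm_greenSeq_sub_le hz hΔ.le hmsc hm1 ℓ (by nlinarith)
  set r := ‖Δ - msc‖
  have hr10 : r ≤ 1 / 10 := by nlinarith [one_le_pow₀ (n := 2) hℓ1]
  rw [inv_HmatX_sub_rootX_rootX (by omega) hℓ hz hΔ.le, mul_assoc _ (msc ^ (2 * ℓ))]
  calc _ ≤ 45 * (2 * r) ^ 2 + 6 * (8 * ℓ * r ^ 2) :=
        (norm_inv_neg_sub_mul_expansion_le hmsc hm1 (norm_natCast_div_sub_one_sub_one_le hd)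
          (by linarith)).trans (by gcongr)
    _ ≤ 228 * ℓ ^ 3 * r ^ 2 := by nlinarith [pow_le_pow_right₀ hℓ1 (by norm_num : 1 ≤ 3)]
end

section
/- Let n, r ≥ 1 be integers, let G and L be n×n complex matrices with G invertible, and let U, V be n×r complex matrices such that both r×r matrices I_r + Vᵀ·G·U and I_r + Vᵀ·L·U are invertible. Set G∘ := G − L and F := −U·(I_r + Vᵀ·L·U)⁻¹·Vᵀ, and assume that ‖G∘·F‖ < 1, where ‖·‖ is the operator norm induced by the Euclidean norm on ℂⁿ. Then the matrix G⁻¹ + U·Vᵀ is invertible, the series ∑_{k≥0} G·F·(G∘·F)^k·G converges absolutely, and (G⁻¹ + U·Vᵀ)⁻¹ − G = ∑_{k=0}^∞ G·F·(G∘·F)^k·G. -/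
/-!
Write `F_X := -U (1 + Vᵀ X U)⁻¹ Vᵀ`, so that `F = F_L`. The Woodbury identity gives
`(G⁻¹ + U Vᵀ)⁻¹ = G + G F_G G`, and the corrections for `G` and `L` satisfy the resolvent-type
identity `F_G - F_L = F_G (G - L) F_L`, i.e. `F = F_G (1 - G∘ F)`. Hence `F_G = F (1 - G∘ F)⁻¹`,
and expanding `(1 - G∘ F)⁻¹` as a Neumann series in the matrix algebra with the `L²` operator
norm gives the result.
-/

namespace Matrix

variable {m n α : Type*} [Fintype m] [DecidableEq m] [Fintype n] [CommRing α]

noncomputable def woodburyCorrection (U : Matrix n m α) (V : Matrix m n α) (X : Matrix n n α) :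
    Matrix n n α :=
  -(U * (1 + V * X * U)⁻¹ * V)

theorem woodburyCorrection_sub_woodburyCorrection (U : Matrix n m α) (V : Matrix m n α)
    {G L : Matrix n n α} (hG : IsUnit (1 + V * G * U)) (hL : IsUnit (1 + V * L * U)) :
    woodburyCorrection U V G - woodburyCorrection U V L =
      woodburyCorrection U V G * (G - L) * woodburyCorrection U V L := by
  set A := 1 + V * G * U
  set B := 1 + V * L * U
  have hAB : V * (G - L) * U = A - B := by
    simp only [A, B, Matrix.mul_sub, Matrix.sub_mul]
    abel
  have hinv : A⁻¹ * (A - B) * B⁻¹ = B⁻¹ - A⁻¹ := by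
    rw [Matrix.mul_sub, Matrix.sub_mul, nonsing_inv_mul _ ((isUnit_iff_isUnit_det _).mp hG),
      Matrix.one_mul, Matrix.mul_assoc, mul_nonsing_inv _ ((isUnit_iff_isUnit_det _).mp hL),
      Matrix.mul_one]
  calc woodburyCorrection U V G - woodburyCorrection U V L = U * (A⁻¹ * (A - B) * B⁻¹) * V := by
        rw [hinv]
        simp only [woodburyCorrection, A, B, Matrix.mul_sub, Matrix.sub_mul]
        abel
    _ = _ := by
        rw [← hAB]
        simp only [woodburyCorrection, A, B, Matrix.mul_neg, Matrix.neg_mul, neg_neg,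
          Matrix.mul_assoc]

theorem isUnit_inv_add_mul [DecidableEq n] {G : Matrix n n α} (U : Matrix n m α)
    (V : Matrix m n α) (hG : IsUnit G) (h : IsUnit (1 + V * G * U)) : IsUnit (G⁻¹ + U * V) := by
  have hG' : IsUnit G⁻¹.det := isUnit_nonsing_inv_det _ ((isUnit_iff_isUnit_det G).mp hG)
  rw [isUnit_iff_isUnit_det, det_add_mul U V hG',
    nonsing_inv_nonsing_inv _ ((isUnit_iff_isUnit_det G).mp hG)]
  exact hG'.mul ((isUnit_iff_isUnit_det _).mp h)

theorem inv_inv_add_mul [DecidableEq n] {G : Matrix n n α} (U : Matrix n m α) (V : Matrix m n α)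
    (hG : IsUnit G) (h : IsUnit (1 + V * G * U)) :
    (G⁻¹ + U * V)⁻¹ = G + G * woodburyCorrection U V G * G := by
  have hGG : G⁻¹⁻¹ = G := nonsing_inv_nonsing_inv _ ((isUnit_iff_isUnit_det G).mp hG)
  have hW := add_mul_mul_inv_eq_sub G⁻¹ U 1 V (isUnit_nonsing_inv_iff.mpr hG) isUnit_one
    (by rwa [inv_one, hGG])
  rw [Matrix.mul_one, hGG, inv_one] at hW
  rw [hW, woodburyCorrection]
  simp only [Matrix.mul_neg, Matrix.neg_mul, Matrix.mul_assoc, sub_eq_add_neg]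

end Matrix

theorem summable_norm_mul_pow_mul {R : Type*} [NormedRing R] (a b t : R) (ht : ‖t‖ < 1) :
    Summable fun k : ℕ => ‖a * t ^ k * b‖ := by
  refine .of_nonneg_of_le (fun _ => norm_nonneg _) (fun k => ?_)
    (((summable_geometric_of_lt_one (norm_nonneg _) ht).mul_left ‖a‖).mul_right ‖b‖)
  rcases k.eq_zero_or_pos with rfl | hk
  · simpa using norm_mul_le a b
  · calc ‖a * t ^ k * b‖ ≤ ‖a‖ * ‖t ^ k‖ * ‖b‖ := norm_mul₃_le
      _ ≤ ‖a‖ * ‖t‖ ^ k * ‖b‖ := by gcongr; exact norm_pow_le' t hk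

theorem woodbury_resolvent_expansion_general (n r : ℕ)
    (G L : Matrix (Fin n) (Fin n) ℂ) (hG : IsUnit G)
    (U V : Matrix (Fin n) (Fin r) ℂ)
    (h1 : IsUnit (1 + V.transpose * G * U))
    (h2 : IsUnit (1 + V.transpose * L * U))
    (Gc F : Matrix (Fin n) (Fin n) ℂ)
    (hGc : Gc = G - L)
    (hF : F = -(U * (1 + V.transpose * L * U)⁻¹ * V.transpose))
    (hnorm : ‖Matrix.toEuclideanCLM (𝕜 := ℂ) (Gc * F)‖ < 1) :
    IsUnit (G⁻¹ + U * V.transpose) ∧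
    Summable (fun k : ℕ => ‖Matrix.toEuclideanCLM (𝕜 := ℂ) (G * F * (Gc * F) ^ k * G)‖) ∧
    HasSum (fun k : ℕ => G * F * (Gc * F) ^ k * G) ((G⁻¹ + U * V.transpose)⁻¹ - G) := by
  -- with this norm, `‖M‖ = ‖toEuclideanCLM M‖` holds definitionally
  let _ : NormedRing (Matrix (Fin n) (Fin n) ℂ) := Matrix.instL2OpNormedRing
  have hT : ‖Gc * F‖ < 1 := hnorm
  have hFL : F = U.woodburyCorrection V.transpose L := hF
  have hres : F = U.woodburyCorrection V.transpose G * (1 - Gc * F) := by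
    rw [hFL, hGc, mul_sub, mul_one, ← mul_assoc,
      ← Matrix.woodburyCorrection_sub_woodburyCorrection U V.transpose h1 h2, sub_sub_cancel]
  have hFG : F * Ring.inverse (1 - Gc * F) = U.woodburyCorrection V.transpose G := calc
    _ = U.woodburyCorrection V.transpose G * (1 - Gc * F) * Ring.inverse (1 - Gc * F) := by
      rw [← hres]
    _ = _ := by
      rw [mul_assoc, Ring.mul_inverse_cancel _ (isUnit_one_sub_of_norm_lt_one hT), mul_one]
  refine ⟨Matrix.isUnit_inv_add_mul U V.transpose hG h1,
    summable_norm_mul_pow_mul (G * F) G (Gc * F) hT, ?_⟩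
  rw [Matrix.inv_inv_add_mul U V.transpose hG h1, add_sub_cancel_left, ← hFG, ← mul_assoc]
  exact ((hasSum_geom_series_inverse (Gc * F) hT).mul_left (G * F)).mul_right G

/-- **Resolvent expansion via the Woodbury formula.** Let `G, L` be `n × n` complex matrices
with `G` invertible, and `U, V` be `n × r` complex matrices such that `I_r + Vᵀ G U` and
`I_r + Vᵀ L U` are invertible. Set `G∘ := G - L` and `F := -U (I_r + Vᵀ L U)⁻¹ Vᵀ`, and
assume `‖G∘ F‖ < 1` in the operator norm induced by the Euclidean norm. Then `G⁻¹ + U Vᵀ` is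
invertible, the series `∑_k G F (G∘ F)^k G` converges absolutely, and
`(G⁻¹ + U Vᵀ)⁻¹ - G = ∑_{k=0}^∞ G F (G∘ F)^k G`. -/
theorem woodbury_resolvent_expansion (n r : ℕ) (hn : 1 ≤ n) (hr : 1 ≤ r)
    (G L : Matrix (Fin n) (Fin n) ℂ) (hG : IsUnit G)
    (U V : Matrix (Fin n) (Fin r) ℂ)
    (h1 : IsUnit (1 + V.transpose * G * U))
    (h2 : IsUnit (1 + V.transpose * L * U))
    (Gc F : Matrix (Fin n) (Fin n) ℂ)
    (hGc : Gc = G - L)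
    (hF : F = -(U * (1 + V.transpose * L * U)⁻¹ * V.transpose))
    (hnorm : ‖Matrix.toEuclideanCLM (𝕜 := ℂ) (Gc * F)‖ < 1) :
    IsUnit (G⁻¹ + U * V.transpose) ∧
    Summable (fun k : ℕ => ‖Matrix.toEuclideanCLM (𝕜 := ℂ) (G * F * (Gc * F) ^ k * G)‖) ∧
    HasSum (fun k : ℕ => G * F * (Gc * F) ^ k * G) ((G⁻¹ + U * V.transpose)⁻¹ - G) :=
  woodbury_resolvent_expansion_general n r G L hG U V h1 h2 Gc F hGc hF hnorm
end

section
/- Let n ≥ 1 and p ≥ 1 be integers, let p₁,…,pₙ ∈ [0,1], and let X₁,…,Xₙ be independent random variables with ℙ(X_i = 1) = p_i and ℙ(X_i = 0) = 1 − p_i. Set W = ∑_{i=1}^n X_i, μ = ∑_{i=1}^n p_i, and f(W) = (W − μ)/n. Then E[f(W)^{2p}] ≤ ((2p−1)/(2n))·E[f(W)^{2p−1}] + ((2p−1)·μ/n²)·E[f(W)^{2p−2}]. -/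
/-!
Write `W = ∑ Xᵢ`, `S = ∑ qᵢ` and `f w = (w - S) / n`, so that
`n f(W)^(2p) = ∑ᵢ (Xᵢ - qᵢ) f(W)^(2p-1)`. As `Xᵢ` is independent of `V = W - Xᵢ`, conditioning
on `Xᵢ` gives `E[(Xᵢ - qᵢ) g(W)] = qᵢ (1 - qᵢ) (E g(V + 1) - E g(V))` for `g = f^(2p-1)`.
The trapezoid bound `a^(2p-1) - b^(2p-1) ≤ (2p-1)/2 · (a - b) (a^(2p-2) + b^(2p-2))` for `b ≤ a`
(the integrand `t^(2p-2)` of the left side is convex) bounds this increment by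
`(2p-1)/(2n) (h(V + 1) + h(V))` with `h = f^(2p-2) ≥ 0`, and undoing the conditioning bounds
`qᵢ (1 - qᵢ) (E h(V + 1) + E h(V))` by `E[(Xᵢ + qᵢ) h(W)]`. Summing over `i`,
`∑ᵢ (Xᵢ + qᵢ) = n f(W) + 2S`.
-/

open MeasureTheory ProbabilityTheory

open Finset

theorem mul_pow_sub_pow_nonneg_of_even_add {a b : ℝ} (hba : b ≤ a) {k j : ℕ}
    (hkj : Even (k + j)) :
    0 ≤ (a ^ k - b ^ k) * (a ^ j - b ^ j) := by
  rcases Nat.even_or_odd k with hk | hk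
  · have hj : Even j := (Nat.even_add.1 hkj).1 hk
    rw [← hk.pow_abs a, ← hk.pow_abs b, ← hj.pow_abs a, ← hj.pow_abs b]
    rcases le_total |b| |a| with hab | hab
    · exact mul_nonneg (sub_nonneg.2 (pow_le_pow_left₀ (abs_nonneg b) hab k))
        (sub_nonneg.2 (pow_le_pow_left₀ (abs_nonneg b) hab j))
    · exact mul_nonneg_of_nonpos_of_nonpos
        (sub_nonpos.2 (pow_le_pow_left₀ (abs_nonneg a) hab k))
        (sub_nonpos.2 (pow_le_pow_left₀ (abs_nonneg a) hab j))
  · have hj : Odd j := Nat.not_even_iff_odd.1 fun hj ↦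
      Nat.not_even_iff_odd.2 hk ((Nat.even_add.1 hkj).2 hj)
    exact mul_nonneg (sub_nonneg.2 (hk.strictMono_pow.monotone hba))
      (sub_nonneg.2 (hj.strictMono_pow.monotone hba))

theorem pow_succ_sub_pow_succ_le {k : ℕ} (hk : Even k) {a b : ℝ} (hba : b ≤ a) :
    a ^ (k + 1) - b ^ (k + 1) ≤ (k + 1) / 2 * (a - b) * (a ^ k + b ^ k) := by
  have hterm (i : ℕ) (hi : i ∈ range (k + 1)) :
      a ^ i * b ^ (k - i) + a ^ (k - i) * b ^ i ≤ a ^ k + b ^ k := by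
    obtain ⟨j, rfl⟩ : ∃ j, k = i + j := ⟨k - i, by grind⟩
    rw [Nat.add_sub_cancel_left, pow_add, pow_add]
    linear_combination mul_pow_sub_pow_nonneg_of_even_add hba hk
  have hreflect : ∑ i ∈ range (k + 1), a ^ i * b ^ (k - i) =
      ∑ i ∈ range (k + 1), a ^ (k - i) * b ^ i := by
    rw [← sum_range_reflect]
    refine sum_congr rfl fun i hi ↦ ?_
    rw [Nat.add_sub_cancel, Nat.sub_sub_self (Nat.lt_succ_iff.1 (mem_range.1 hi))]
  have hsum : 2 * ∑ i ∈ range (k + 1), a ^ i * b ^ (k - i) ≤ (k + 1) * (a ^ k + b ^ k) := by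
    calc 2 * ∑ i ∈ range (k + 1), a ^ i * b ^ (k - i)
        = ∑ i ∈ range (k + 1), (a ^ i * b ^ (k - i) + a ^ (k - i) * b ^ i) := by
          rw [sum_add_distrib, ← hreflect, two_mul]
      _ ≤ ∑ _i ∈ range (k + 1), (a ^ k + b ^ k) := sum_le_sum hterm
      _ = (k + 1) * (a ^ k + b ^ k) := by simp [mul_add]
  rw [← geom_sum₂_mul, Nat.add_sub_cancel]
  linarith [mul_le_mul_of_nonneg_right hsum (sub_nonneg.2 hba)]

theorem sub_div_pow_succ_sub_le {k : ℕ} (hk : Even k) (S : ℝ) {n : ℝ} (hn : 0 < n) (v : ℝ) :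
    ((v + 1 - S) / n) ^ (k + 1) - ((v - S) / n) ^ (k + 1) ≤
      (k + 1) / (2 * n) * (((v + 1 - S) / n) ^ k + ((v - S) / n) ^ k) := by
  have := pow_succ_sub_pow_succ_le hk (a := (v + 1 - S) / n) (b := (v - S) / n)
    (by gcongr; linarith)
  convert this using 2
  field_simp
  ring

namespace ProbabilityTheory

variable {Ω : Type*} [MeasurableSpace Ω] {μ : Measure Ω} {X V : Ω → ℝ} {q : ℝ}

theorem ae_eq_zero_or_eq_one_of_measure_eq [IsProbabilityMeasure μ] (hX : Measurable X)
    (hq : q ∈ Set.Icc 0 1) (h1 : μ {ω | X ω = 1} = ENNReal.ofReal q)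
    (h0 : μ {ω | X ω = 0} = ENNReal.ofReal (1 - q)) :
    ∀ᵐ ω ∂μ, X ω = 0 ∨ X ω = 1 := by
  have hdisj : Disjoint {ω | X ω = 0} {ω | X ω = 1} :=
    Set.disjoint_left.2 fun ω h0 h1 ↦ zero_ne_one (h0.symm.trans h1)
  rw [ae_iff_measure_eq, Set.ofPred_or, measure_union hdisj (hX (measurableSet_singleton 1)),
    h0, h1, ← ENNReal.ofReal_add (by linarith [hq.2]) hq.1, measure_univ, sub_add_cancel,
    ENNReal.ofReal_one]
  exact ((hX (measurableSet_singleton 0)).union (hX (measurableSet_singleton 1))).nullMeasurableSet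

theorem integral_eq_of_ae_eq_zero_or_eq_one (hX : Measurable X) (hq : 0 ≤ q)
    (hX01 : ∀ᵐ ω ∂μ, X ω = 0 ∨ X ω = 1) (h1 : μ {ω | X ω = 1} = ENNReal.ofReal q) :
    ∫ ω, X ω ∂μ = q := by
  have hXind : X =ᵐ[μ] {ω | X ω = 1}.indicator 1 := by
    filter_upwards [hX01] with ω hω
    rcases hω with hω | hω <;> simp [hω]
  have hm : MeasurableSet {ω | X ω = 1} := hX (measurableSet_singleton 1)
  rw [integral_congr_ae hXind, integral_indicator_one hm, measureReal_def,
    h1, ENNReal.toReal_ofReal hq]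

theorem integrable_comp_of_ae_mem_finite [IsFiniteMeasure μ] {α : Type*} [MeasurableSpace α]
    {Z : Ω → α} (hZ : AEMeasurable Z μ) {s : Set α} (hs : s.Finite) (hZs : ∀ᵐ ω ∂μ, Z ω ∈ s)
    {F : α → ℝ} (hF : Measurable F) : Integrable (fun ω ↦ F (Z ω)) μ := by
  obtain ⟨C, hC⟩ := (hs.image fun x ↦ ‖F x‖).bddAbove
  refine .of_bound (hF.comp_aemeasurable hZ).aestronglyMeasurable C ?_
  filter_upwards [hZs] with ω hω using hC ⟨_, hω, rfl⟩

theorem comp_ae_eq_of_ae_eq_zero_or_eq_one (hX01 : ∀ᵐ ω ∂μ, X ω = 0 ∨ X ω = 1)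
    (ψ : ℝ → ℝ → ℝ) :
    (fun ω ↦ ψ (X ω) (V ω)) =ᵐ[μ] fun ω ↦ X ω * ψ 1 (V ω) + (1 - X ω) * ψ 0 (V ω) := by
  filter_upwards [hX01] with ω hω
  rcases hω with hω | hω <;> simp [hω]

variable {ψ : ℝ → ℝ → ℝ}

theorem integrable_of_ae_eq_zero_or_eq_one [IsFiniteMeasure μ] (hX : AEMeasurable X μ)
    (hX01 : ∀ᵐ ω ∂μ, X ω = 0 ∨ X ω = 1) : Integrable X μ :=
  .of_mem_Icc 0 1 hX (by
    filter_upwards [hX01] with ω hω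
    rcases hω with hω | hω <;> simp [hω])

theorem IndepFun.integrable_comp_of_ae_eq_zero_or_eq_one [IsFiniteMeasure μ]
    (hXV : IndepFun X V μ) (hX : AEMeasurable X μ) (hX01 : ∀ᵐ ω ∂μ, X ω = 0 ∨ X ω = 1)
    (hψ0 : Measurable (ψ 0)) (hψ1 : Measurable (ψ 1))
    (hV0 : Integrable (fun ω ↦ ψ 0 (V ω)) μ) (hV1 : Integrable (fun ω ↦ ψ 1 (V ω)) μ) :
    Integrable (fun ω ↦ ψ (X ω) (V ω)) μ := by
  have hXi := integrable_of_ae_eq_zero_or_eq_one hX hX01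
  refine Integrable.congr ?_ (comp_ae_eq_of_ae_eq_zero_or_eq_one hX01 ψ).symm
  exact ((hXV.comp measurable_id hψ1).integrable_mul hXi hV1).add
    ((hXV.comp (measurable_id.const_sub 1) hψ0).integrable_mul
      ((integrable_const 1).sub hXi) hV0)

theorem IndepFun.integral_comp_of_ae_eq_zero_or_eq_one [IsProbabilityMeasure μ]
    (hXV : IndepFun X V μ) (hX : AEMeasurable X μ) (hX01 : ∀ᵐ ω ∂μ, X ω = 0 ∨ X ω = 1)
    (hXq : ∫ ω, X ω ∂μ = q)
    (hψ0 : Measurable (ψ 0)) (hψ1 : Measurable (ψ 1))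
    (hV0 : Integrable (fun ω ↦ ψ 0 (V ω)) μ) (hV1 : Integrable (fun ω ↦ ψ 1 (V ω)) μ) :
    ∫ ω, ψ (X ω) (V ω) ∂μ = q * ∫ ω, ψ 1 (V ω) ∂μ + (1 - q) * ∫ ω, ψ 0 (V ω) ∂μ := by
  have hXi := integrable_of_ae_eq_zero_or_eq_one hX hX01
  have h1 : IndepFun X (fun ω ↦ ψ 1 (V ω)) μ := hXV.comp measurable_id hψ1
  have h0 : IndepFun (fun ω ↦ 1 - X ω) (fun ω ↦ ψ 0 (V ω)) μ :=
    hXV.comp (measurable_id.const_sub 1) hψ0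
  have hint1 : Integrable (fun ω ↦ X ω * ψ 1 (V ω)) μ := h1.integrable_mul hXi hV1
  have hint0 : Integrable (fun ω ↦ (1 - X ω) * ψ 0 (V ω)) μ :=
    h0.integrable_mul ((integrable_const 1).sub hXi) hV0
  have e1 : ∫ ω, X ω * ψ 1 (V ω) ∂μ = (∫ ω, X ω ∂μ) * ∫ ω, ψ 1 (V ω) ∂μ :=
    h1.integral_mul_eq_mul_integral hX.aestronglyMeasurable hV1.aestronglyMeasurable
  have e0 : ∫ ω, (1 - X ω) * ψ 0 (V ω) ∂μ = (∫ ω, 1 - X ω ∂μ) * ∫ ω, ψ 0 (V ω) ∂μ :=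
    h0.integral_mul_eq_mul_integral ((integrable_const 1).sub hXi).aestronglyMeasurable
      hV0.aestronglyMeasurable
  rw [integral_congr_ae (comp_ae_eq_of_ae_eq_zero_or_eq_one hX01 ψ), integral_add hint1 hint0,
    e1, e0, integral_sub (integrable_const 1) hXi, hXq]
  simp

theorem IndepFun.integral_sub_mul_le_of_ae_eq_zero_or_eq_one [IsProbabilityMeasure μ]
    (hXV : IndepFun X V μ) (hX : AEMeasurable X μ) (hX01 : ∀ᵐ ω ∂μ, X ω = 0 ∨ X ω = 1)
    (hq : q ∈ Set.Icc 0 1) (hXq : ∫ ω, X ω ∂μ = q) {g h : ℝ → ℝ} (hg : Measurable g)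
    (hh : Measurable h) (hgV : Integrable (fun ω ↦ g (V ω)) μ)
    (hgV1 : Integrable (fun ω ↦ g (V ω + 1)) μ) (hhV : Integrable (fun ω ↦ h (V ω)) μ)
    (hhV1 : Integrable (fun ω ↦ h (V ω + 1)) μ) {c : ℝ} (hc : 0 ≤ c)
    (hgh : ∀ v, g (v + 1) - g v ≤ c * (h (v + 1) + h v)) (hh0 : ∀ v, 0 ≤ h v) :
    ∫ ω, (X ω - q) * g (X ω + V ω) ∂μ ≤ c * ∫ ω, (X ω + q) * h (X ω + V ω) ∂μ := by
  have hg_split : ∫ ω, (X ω - q) * g (X ω + V ω) ∂μ =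
      q * (1 - q) * (∫ ω, g (V ω + 1) ∂μ - ∫ ω, g (V ω) ∂μ) := by
    rw [hXV.integral_comp_of_ae_eq_zero_or_eq_one (ψ := fun x v ↦ (x - q) * g (x + v)) hX hX01
      hXq (by fun_prop) (by fun_prop) (by simpa using hgV.const_mul (-q))
      (by simpa [add_comm] using hgV1.const_mul (1 - q))]
    simp only [zero_sub, zero_add, add_comm (1 : ℝ), integral_const_mul, neg_mul, integral_neg]
    ring
  let ψ : ℝ → ℝ → ℝ := fun x v ↦ ((1 - q) * x + q * (1 - x)) * h (x + v)
  have hψ0 : Integrable (fun ω ↦ ψ 0 (V ω)) μ := by simpa [ψ] using hhV.const_mul q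
  have hψ1 : Integrable (fun ω ↦ ψ 1 (V ω)) μ := by
    simpa [ψ, add_comm] using hhV1.const_mul (1 - q)
  have hh_split : ∫ ω, ψ (X ω) (V ω) ∂μ =
      q * (1 - q) * (∫ ω, h (V ω + 1) ∂μ + ∫ ω, h (V ω) ∂μ) := by
    rw [hXV.integral_comp_of_ae_eq_zero_or_eq_one hX hX01 hXq (by fun_prop) (by fun_prop) hψ0 hψ1]
    simp only [ψ, mul_zero, zero_add, sub_zero, mul_one, sub_self, add_zero, add_comm (1 : ℝ),
      integral_const_mul]
    ring
  have hg_mono : ∫ ω, g (V ω + 1) ∂μ - ∫ ω, g (V ω) ∂μ ≤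
      c * (∫ ω, h (V ω + 1) ∂μ + ∫ ω, h (V ω) ∂μ) := by
    rw [← integral_sub hgV1 hgV, ← integral_add hhV1 hhV, ← integral_const_mul]
    exact integral_mono (hgV1.sub hgV) ((hhV1.add hhV).const_mul c) fun ω ↦ hgh (V ω)
  have hh_mono : ∫ ω, ψ (X ω) (V ω) ∂μ ≤ ∫ ω, (X ω + q) * h (X ω + V ω) ∂μ := by
    have hψint : Integrable (fun ω ↦ ψ (X ω) (V ω)) μ :=
      hXV.integrable_comp_of_ae_eq_zero_or_eq_one hX hX01 (by fun_prop) (by fun_prop) hψ0 hψ1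
    have hint : Integrable (fun ω ↦ (X ω + q) * h (X ω + V ω)) μ :=
      hXV.integrable_comp_of_ae_eq_zero_or_eq_one (ψ := fun x v ↦ (x + q) * h (x + v)) hX hX01
        (by fun_prop) (by fun_prop) (by simpa using hhV.const_mul q)
        (by simpa [add_comm] using hhV1.const_mul (1 + q))
    refine integral_mono_ae hψint hint ?_
    filter_upwards [hX01] with ω hω
    rcases hω with hω | hω <;> simp only [ψ, hω]
    · simp
    · nlinarith [hh0 (1 + V ω), hq.1]
  calc ∫ ω, (X ω - q) * g (X ω + V ω) ∂μ
      = q * (1 - q) * (∫ ω, g (V ω + 1) ∂μ - ∫ ω, g (V ω) ∂μ) := hg_split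
    _ ≤ q * (1 - q) * (c * (∫ ω, h (V ω + 1) ∂μ + ∫ ω, h (V ω) ∂μ)) :=
        mul_le_mul_of_nonneg_left hg_mono (mul_nonneg hq.1 (sub_nonneg.2 hq.2))
    _ = c * ∫ ω, ψ (X ω) (V ω) ∂μ := by rw [hh_split]; ring
    _ ≤ c * ∫ ω, (X ω + q) * h (X ω + V ω) ∂μ := mul_le_mul_of_nonneg_left hh_mono hc

theorem iIndepFun.integral_sub_mul_le_of_ae_eq_zero_or_eq_one {ι : Type*} [Fintype ι]
    [IsProbabilityMeasure μ] {X : ι → Ω → ℝ} {q : ι → ℝ} (hX : ∀ i, Measurable (X i))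
    (hindep : iIndepFun X μ) (hX01 : ∀ i, ∀ᵐ ω ∂μ, X i ω = 0 ∨ X i ω = 1)
    (hq : ∀ i, q i ∈ Set.Icc 0 1) (hXq : ∀ i, ∫ ω, X i ω ∂μ = q i) {g h : ℝ → ℝ}
    (hg : Measurable g) (hh : Measurable h) {c : ℝ} (hc : 0 ≤ c)
    (hgh : ∀ v, g (v + 1) - g v ≤ c * (h (v + 1) + h v)) (hh0 : ∀ v, 0 ≤ h v) :
    ∫ ω, (∑ i, X i ω - ∑ i, q i) * g (∑ i, X i ω) ∂μ ≤
      c * (∫ ω, (∑ i, X i ω - ∑ i, q i) * h (∑ i, X i ω) ∂μ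
        + 2 * (∑ i, q i) * ∫ ω, h (∑ i, X i ω) ∂μ) := by
  classical
  have hint (F : (ι → ℝ) → ℝ) (hF : Measurable F) :
      Integrable (fun ω ↦ F (fun i ↦ X i ω)) μ :=
    integrable_comp_of_ae_mem_finite (measurable_pi_lambda _ hX).aemeasurable
      (Set.Finite.pi fun _ ↦ Set.toFinite {0, 1})
      (by filter_upwards [ae_all_iff.2 hX01] with ω hω i _ using hω i) hF
  have hcoord (i : ι) : ∫ ω, (X i ω - q i) * g (∑ j, X j ω) ∂μ ≤
      c * ∫ ω, (X i ω + q i) * h (∑ j, X j ω) ∂μ := by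
    have hsplit (ω : Ω) : ∑ j, X j ω = X i ω + ∑ j ∈ univ.erase i, X j ω :=
      (add_sum_erase _ _ (mem_univ i)).symm
    have hindep_i : IndepFun (X i) (fun ω ↦ ∑ j ∈ univ.erase i, X j ω) μ := by
      simpa only [Finset.sum_fn] using
        (hindep.indepFun_finsetSum_of_notMem hX (notMem_erase i univ)).symm
    simp only [hsplit]
    exact hindep_i.integral_sub_mul_le_of_ae_eq_zero_or_eq_one (hX i).aemeasurable (hX01 i)
      (hq i) (hXq i) hg hh (hint (fun x ↦ g (∑ j ∈ univ.erase i, x j)) (by fun_prop))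
      (hint (fun x ↦ g (∑ j ∈ univ.erase i, x j + 1)) (by fun_prop))
      (hint (fun x ↦ h (∑ j ∈ univ.erase i, x j)) (by fun_prop))
      (hint (fun x ↦ h (∑ j ∈ univ.erase i, x j + 1)) (by fun_prop)) hc hgh hh0
  calc ∫ ω, (∑ i, X i ω - ∑ i, q i) * g (∑ i, X i ω) ∂μ
      = ∑ i, ∫ ω, (X i ω - q i) * g (∑ j, X j ω) ∂μ := by
        rw [← integral_finsetSum _ fun i _ ↦
          hint (fun x ↦ (x i - q i) * g (∑ j, x j)) (by fun_prop)]
        simp only [← sum_sub_distrib, sum_mul]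
    _ ≤ ∑ i, c * ∫ ω, (X i ω + q i) * h (∑ j, X j ω) ∂μ := sum_le_sum fun i _ ↦ hcoord i
    _ = c * ∫ ω, ((∑ i, X i ω - ∑ i, q i) * h (∑ i, X i ω)
          + 2 * (∑ i, q i) * h (∑ i, X i ω)) ∂μ := by
        rw [← mul_sum, ← integral_finsetSum _ fun i _ ↦
          hint (fun x ↦ (x i + q i) * h (∑ j, x j)) (by fun_prop)]
        congr 2 with ω
        rw [← sum_mul, sum_add_distrib]
        ring
    _ = c * (∫ ω, (∑ i, X i ω - ∑ i, q i) * h (∑ i, X i ω) ∂μ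
        + 2 * (∑ i, q i) * ∫ ω, h (∑ i, X i ω) ∂μ) := by
        rw [integral_add, integral_const_mul]
        · exact hint (fun x ↦ (∑ i, x i - ∑ i, q i) * h (∑ i, x i)) (by fun_prop)
        · exact hint (fun x ↦ 2 * (∑ i, q i) * h (∑ i, x i)) (by fun_prop)

end ProbabilityTheory

/-- **Moment recursion for sums of independent Bernoulli variables via exchangeable pairs.**
Let `X₁, …, Xₙ` be independent `Bernoulli(p_i)` random variables, `W = ∑ X_i`,
`μ̄ = ∑ p_i`, and `f(W) = (W - μ̄)/n`. Then for every `p ≥ 1`,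
`E[f(W)^{2p}] ≤ ((2p-1)/(2n)) E[f(W)^{2p-1}] + ((2p-1) μ̄ / n²) E[f(W)^{2p-2}]`. -/
theorem bernoulli_moment_recursion (n p : ℕ) (hn : 1 ≤ n) (hp : 1 ≤ p)
    {Ω : Type*} [MeasurableSpace Ω] (μ : Measure Ω) [IsProbabilityMeasure μ]
    (q : Fin n → ℝ) (hq : ∀ i, q i ∈ Set.Icc (0 : ℝ) 1)
    (X : Fin n → Ω → ℝ) (hmeas : ∀ i, Measurable (X i))
    (hindep : iIndepFun X μ)
    (h1 : ∀ i, μ {ω | X i ω = 1} = ENNReal.ofReal (q i))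
    (h0 : ∀ i, μ {ω | X i ω = 0} = ENNReal.ofReal (1 - q i)) :
    (∫ ω, ((∑ i, X i ω - ∑ i, q i) / n) ^ (2 * p) ∂μ) ≤
      ((2 * (p : ℝ) - 1) / (2 * n)) *
          ∫ ω, ((∑ i, X i ω - ∑ i, q i) / n) ^ (2 * p - 1) ∂μ
        + ((2 * (p : ℝ) - 1) * (∑ i, q i) / (n : ℝ) ^ 2) *
          ∫ ω, ((∑ i, X i ω - ∑ i, q i) / n) ^ (2 * p - 2) ∂μ := by
  obtain ⟨m, rfl⟩ : ∃ m, p = m + 1 := ⟨p - 1, by omega⟩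
  rw [show 2 * (m + 1) = 2 * m + 1 + 1 by ring, show 2 * m + 1 + 1 - 1 = 2 * m + 1 by omega,
    show 2 * m + 1 + 1 - 2 = 2 * m by omega]
  have hn0 : (0 : ℝ) < n := by exact_mod_cast hn
  have hX01 i := ae_eq_zero_or_eq_one_of_measure_eq (hmeas i) (hq i) (h1 i) (h0 i)
  have key := hindep.integral_sub_mul_le_of_ae_eq_zero_or_eq_one hmeas hX01 hq
    (fun i ↦ integral_eq_of_ae_eq_zero_or_eq_one (hmeas i) (hq i).1 (hX01 i) (h1 i))
    (g := fun w ↦ ((w - ∑ i, q i) / n) ^ (2 * m + 1))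
    (h := fun w ↦ ((w - ∑ i, q i) / n) ^ (2 * m))
    (by fun_prop) (by fun_prop) (by positivity) (sub_div_pow_succ_sub_le (even_two_mul m) _ hn0)
    fun v ↦ (even_two_mul m).pow_nonneg _
  have hcentered (k : ℕ) :
      ∫ ω, (∑ i, X i ω - ∑ i, q i) * ((∑ i, X i ω - ∑ i, q i) / n) ^ k ∂μ =
        n * ∫ ω, ((∑ i, X i ω - ∑ i, q i) / n) ^ (k + 1) ∂μ := by
    rw [← integral_const_mul]
    congr 1 with ω
    rw [pow_succ, mul_left_comm, mul_div_cancel₀ _ hn0.ne', mul_comm]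
  rw [hcentered, hcentered] at key
  refine le_of_mul_le_mul_left (a := (n : ℝ)) (key.trans_eq ?_) hn0
  push_cast
  field_simp
  ring
end
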